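/- arXiv:math/0205325 — 6 statements merged into one kernel-verified Lean document; each statement's English description precedes it below -/
import Mathlib

section
/- Let (M,≤_M) and (L,≤_L) be partially ordered sets, let D be a natural number such that every strictly increasing chain m_0 <_M m_1 <_M … <_M m_k in M has k ≤ D, and let ⊞: Set L → L, ⊟: L × L → L, ⊚: L → L satisfy axiom system 𝒜. Then for every function ψ: M → L there exist a natural number k ≤ D and monotone functions φ_1, …, φ_{k+1}: M → L such that for all x ∈ M, ψ(x) = ⊟(φ_1(x), ⊟(φ_2(x), …, ⊟(φ_k(x), φ_{k+1}(x))…)); in particular the number of occurrences of ⊟ in this representation is at most D. -/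
/-- The nested approximating form `⊟(φ₁, ⊟(φ₂, …, ⊟(φ_k, φ_{k+1})…))`
built from a binary operation `sub = ⊟` and `k + 1` values. -/
def nestForm {L : Type*} (sub : L → L → L) : (k : ℕ) → (Fin (k + 1) → L) → L
  | 0, φ => φ 0
  | k + 1, φ => sub (φ 0) (nestForm sub k fun i => φ i.succ)

/-! Stratify `M` by a strictly monotone rank `M → {0, …, D}` (the height of an element). Starting
from `ψ₀ = ψ`, at stage `j` let `φⱼ` agree with `ψⱼ` on ranks `≤ j` and be the `⊞`-hull of
`ψⱼ` over `Iic x` above rank `j`; axiom A4 provides `ψⱼ₊₁` with `ψⱼ = ⊟(φⱼ, ψⱼ₊₁)`, and on ranks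
`≤ j` we take `ψⱼ₊₁ = ⊚ φⱼ`. By induction on `j` each `φⱼ` is monotone, and `φ_D = ψ_D`
because every rank is at most `D`. -/

theorem nestForm_eq_of_telescope {L : Type*} (sub : L → L → L) :
    ∀ (n : ℕ) (a g : ℕ → L), (∀ j, sub (a j) (g (j + 1)) = g j) → a n = g n →
      nestForm sub n (fun i => a i) = g 0
  | 0, _, _, _, hlast => hlast
  | n + 1, a, g, hstep, hlast => by
    have htail := nestForm_eq_of_telescope sub n (fun j => a (j + 1)) (fun j => g (j + 1))
      (fun j => hstep (j + 1)) hlast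
    simpa [nestForm, htail] using hstep 0

theorem exists_strictMono_rank_le {M : Type*} [PartialOrder M] (D : ℕ)
    (hChain : ∀ (k : ℕ) (c : Fin (k + 1) → M), StrictMono c → k ≤ D) :
    ∃ rank : M → ℕ, StrictMono rank ∧ ∀ x, rank x ≤ D := by
  have hheight (x : M) : Order.height x ≤ D :=
    Order.height_le fun p _ => mod_cast hChain p.length p.toFun p.strictMono
  have hfinite (x : M) : Order.height x ≠ ⊤ :=
    ne_top_of_le_ne_top (ENat.natCast_ne_top D) (hheight x)
  refine ⟨fun x => (Order.height x).toNat, fun x y hxy => ?_,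
    fun x => ENat.toNat_le_of_le_natCast (hheight x)⟩
  have hlt := Order.height_strictMono hxy (lt_top_iff_ne_top.mpr (hfinite x))
  rwa [← ENat.natCast_toNat (hfinite x), ← ENat.natCast_toNat (hfinite y), Nat.cast_lt] at hlt

theorem exists_remainder {L : Type*} [PartialOrder L] {boxminus : L → L → L} {circ : L → L}
    (hA3a : ∀ l : L, boxminus l (circ l) = l)
    (hA4 : ∀ l l' : L, l ≤ l' → ∃ l'' : L, boxminus l' l'' = l ∧ circ l' ≤ l'') :
    ∃ remainder : L → L → L, (∀ l, remainder l l = circ l) ∧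
      ∀ l l', l ≤ l' → boxminus l' (remainder l l') = l ∧ circ l' ≤ remainder l l' := by
  classical
  refine ⟨fun l l' => if h : l ≤ l' ∧ l ≠ l' then (hA4 l l' h.1).choose else circ l', ?_, ?_⟩
  · intro l
    simp
  · intro l l' hle
    by_cases heq : l = l'
    · subst heq
      simp [hA3a]
    · simpa [hle, heq] using (hA4 l l' hle).choose_spec

namespace SuccessiveApproximation

variable {M L : Type*} [PartialOrder M]
  (boxplus : Set L → L) (remainder : L → L → L) (rank : M → ℕ)

def envelope (j : ℕ) (f : M → L) (x : M) : L :=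
  if rank x ≤ j then f x else boxplus (f '' Set.Iic x)

def residual (ψ : M → L) : ℕ → M → L
  | 0 => ψ
  | j + 1 => fun x => remainder (residual ψ j x) (envelope boxplus rank j (residual ψ j) x)

variable {boxplus remainder rank}

theorem envelope_of_rank_le {j : ℕ} {x : M} (hx : rank x ≤ j) (f : M → L) :
    envelope boxplus rank j f x = f x :=
  if_pos hx

variable [PartialOrder L]

theorem le_envelope (hA2a : ∀ (S : Set L), ∀ x ∈ S, x ≤ boxplus S) (j : ℕ) (f : M → L) (x : M) :
    f x ≤ envelope boxplus rank j f x := by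
  unfold envelope
  split_ifs
  · exact le_rfl
  · exact hA2a _ _ ⟨x, le_rfl, rfl⟩

theorem envelope_le_envelope_of_lt_rank (hA2a : ∀ (S : Set L), ∀ x ∈ S, x ≤ boxplus S)
    (hA2b : ∀ S T : Set L, S ⊆ T → boxplus S ≤ boxplus T)
    {j : ℕ} (f : M → L) {x y : M} (hxy : x ≤ y) (hy : j < rank y) :
    envelope boxplus rank j f x ≤ envelope boxplus rank j f y := by
  unfold envelope
  rw [if_neg (Nat.not_le.mpr hy)]
  split_ifs
  · exact hA2a _ _ ⟨x, hxy, rfl⟩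
  · exact hA2b _ _ (Set.image_mono (Set.Iic_subset_Iic.mpr hxy))

variable (hA2a : ∀ (S : Set L), ∀ x ∈ S, x ≤ boxplus S) {circ : L → L} {boxminus : L → L → L}
  (hrem : ∀ l l', l ≤ l' → boxminus l' (remainder l l') = l ∧ circ l' ≤ remainder l l')
  (ψ : M → L)
include hA2a hrem

theorem boxminus_envelope_residual_succ (j : ℕ) (x : M) :
    boxminus (envelope boxplus rank j (residual boxplus remainder rank ψ j) x)
      (residual boxplus remainder rank ψ (j + 1) x) = residual boxplus remainder rank ψ j x :=
  (hrem _ _ (le_envelope hA2a j _ x)).1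

theorem monotone_envelope_residual (hA2b : ∀ S T : Set L, S ⊆ T → boxplus S ≤ boxplus T)
    (hA3b : Monotone circ) (hremSelf : ∀ l, remainder l l = circ l) (hrank : StrictMono rank) :
    ∀ j, Monotone (envelope boxplus rank j (residual boxplus remainder rank ψ j)) := by
  intro j x y hxy
  rcases hxy.eq_or_lt with rfl | hlt
  · exact le_rfl
  by_cases hy : j < rank y
  · exact envelope_le_envelope_of_lt_rank hA2a hA2b _ hxy hy
  -- Below rank `j` the envelope is the residual, which on ranks `< j` is `⊚` of the previous
  -- envelope, monotone by induction.
  obtain ⟨i, rfl⟩ : ∃ i, j = i + 1 := Nat.exists_eq_add_one.mpr ((Nat.zero_le _).trans_lt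
    ((hrank hlt).trans_le (Nat.not_lt.mp hy)))
  have hx : rank x ≤ i := by have := hrank hlt; omega
  have ih := monotone_envelope_residual hA2b hA3b hremSelf hrank i hxy
  calc envelope boxplus rank (i + 1) (residual boxplus remainder rank ψ (i + 1)) x
      = circ (envelope boxplus rank i (residual boxplus remainder rank ψ i) x) := by
        rw [envelope_of_rank_le (by omega)]
        dsimp only [residual]
        rw [envelope_of_rank_le hx, hremSelf]
    _ ≤ circ (envelope boxplus rank i (residual boxplus remainder rank ψ i) y) := hA3b ih
    _ ≤ residual boxplus remainder rank ψ (i + 1) y := (hrem _ _ (le_envelope hA2a i _ y)).2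
    _ = envelope boxplus rank (i + 1) (residual boxplus remainder rank ψ (i + 1)) y :=
        (envelope_of_rank_le (Nat.not_lt.mp hy) _).symm

end SuccessiveApproximation

/-- Theorem 1: under axiom system 𝒜 and the bound `D` on lengths of strictly
increasing chains in `M`, every `ψ : M → L` has a representation
`ψ = ⊟(φ₁, ⊟(φ₂, …, ⊟(φ_k, φ_{k+1})…))` with all `φᵢ` monotone and `k ≤ D`. -/
theorem successive_approximation_A
    {M L : Type*} [PartialOrder M] [PartialOrder L]
    (D : ℕ)
    (hChain : ∀ (k : ℕ) (c : Fin (k + 1) → M), StrictMono c → k ≤ D)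
    (boxplus : Set L → L) (boxminus : L → L → L) (circ : L → L)
    (hA2a : ∀ (S : Set L), ∀ x ∈ S, x ≤ boxplus S)
    (hA2b : ∀ S T : Set L, S ⊆ T → boxplus S ≤ boxplus T)
    (hA3a : ∀ l : L, boxminus l (circ l) = l)
    (hA3b : Monotone circ)
    (hA4 : ∀ l l' : L, l ≤ l' → ∃ l'' : L, boxminus l' l'' = l ∧ circ l' ≤ l'')
    (ψ : M → L) :
    ∃ k ≤ D, ∃ φ : Fin (k + 1) → (M → L),
      (∀ i, Monotone (φ i)) ∧
        ∀ x : M, ψ x = nestForm boxminus k (fun i => φ i x) := by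
  open SuccessiveApproximation in
  obtain ⟨rank, hrank, hrankD⟩ := exists_strictMono_rank_le D hChain
  obtain ⟨remainder, hremSelf, hrem⟩ := exists_remainder hA3a hA4
  let φ (j : ℕ) := envelope boxplus rank j (residual boxplus remainder rank ψ j)
  refine ⟨D, le_rfl, fun i => φ i,
    fun i => monotone_envelope_residual hA2a hrem ψ hA2b hA3b hremSelf hrank i, fun x => ?_⟩
  exact (nestForm_eq_of_telescope boxminus D (fun j => φ j x)
    (fun j => residual boxplus remainder rank ψ j x)
    (fun j => boxminus_envelope_residual_succ hA2a hrem ψ j x)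
    (envelope_of_rank_le (hrankD x) _)).symm
end

section
/- Let (M,≤_M) and (L,≤_L) be partially ordered sets, let D be a natural number such that every strictly increasing chain m_0 <_M m_1 <_M … <_M m_k in M has k ≤ D, and let ⊞: Set L → L, ⊟: L × L → L, ⊚: L → L satisfy axiom system 𝒜. Then for every function ψ: M → L there exist monotone functions φ_1, …, φ_{D+1}: M → L (exactly D+1 of them) such that for all x ∈ M, ψ(x) = ⊟(φ_1(x), ⊟(φ_2(x), …, ⊟(φ_D(x), φ_{D+1}(x))…)), i.e. ψ is given by the universal nested form with exactly D occurrences of ⊟. -/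
open Order Set

/-- Axiom system 𝒜, (A2)–(A4), for `⊞ = boxplus`, `⊟ = boxminus`, `⊚ = circ`. -/
structure AxiomSystemA {L : Type*} [PartialOrder L]
    (boxplus : Set L → L) (boxminus : L → L → L) (circ : L → L) : Prop where
  le_boxplus : ∀ (S : Set L), ∀ x ∈ S, x ≤ boxplus S
  boxplus_mono : ∀ S T : Set L, S ⊆ T → boxplus S ≤ boxplus T
  boxminus_circ : ∀ l : L, boxminus l (circ l) = l
  circ_mono : Monotone circ
  exists_boxminus_eq : ∀ l l' : L, l ≤ l' → ∃ l'' : L, boxminus l' l'' = l ∧ circ l' ≤ l''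

section Rank

variable {M L : Type*} [PartialOrder M] {r : M → ℕ}

def envelope (boxplus : Set L → L) (r : M → ℕ) (k : ℕ) (ψ : M → L) (x : M) : L :=
  if r x ≤ k then ψ x else boxplus (ψ '' Iic x)

variable {boxplus : Set L → L} {k : ℕ} {ψ : M → L}

lemma envelope_of_le {x : M} (hx : r x ≤ k) : envelope boxplus r k ψ x = ψ x := if_pos hx

lemma envelope_of_lt {x : M} (hx : k < r x) :
    envelope boxplus r k ψ x = boxplus (ψ '' Iic x) := if_neg (not_le.mpr hx)

variable [PartialOrder L]

def MonotoneBelow (r : M → ℕ) (k : ℕ) (ψ : M → L) : Prop :=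
  ∀ ⦃x y : M⦄, x ≤ y → r x < k → ψ x ≤ ψ y

lemma monotoneBelow_zero : MonotoneBelow r 0 ψ :=
  fun _ _ _ h => absurd h (Nat.not_lt_zero _)

lemma MonotoneBelow.le_of_le (hψ : MonotoneBelow r k ψ) (hr : StrictMono r)
    {x y : M} (hxy : x ≤ y) (hy : r y ≤ k) : ψ x ≤ ψ y := by
  rcases hxy.eq_or_lt with rfl | hlt
  · exact le_rfl
  · exact hψ hxy ((hr hlt).trans_le hy)

lemma MonotoneBelow.monotone {D : ℕ} (hψ : MonotoneBelow r k ψ)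
    (hr : StrictMono r) (hrD : ∀ x, r x ≤ D) (hDk : D ≤ k) : Monotone ψ :=
  fun _ y hxy => hψ.le_of_le hr hxy ((hrD y).trans hDk)

lemma le_envelope (hplus : ∀ (S : Set L), ∀ x ∈ S, x ≤ boxplus S) (x : M) :
    ψ x ≤ envelope boxplus r k ψ x := by
  rcases le_or_gt (r x) k with hx | hx
  · exact (envelope_of_le hx).ge
  · exact (envelope_of_lt hx).ge.trans' (hplus _ _ (mem_image_of_mem ψ self_mem_Iic))

lemma monotone_envelope (hplus : ∀ (S : Set L), ∀ x ∈ S, x ≤ boxplus S)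
    (hplus_mono : ∀ S T : Set L, S ⊆ T → boxplus S ≤ boxplus T)
    (hr : StrictMono r) (hψ : MonotoneBelow r k ψ) : Monotone (envelope boxplus r k ψ) := by
  intro x y hxy
  rcases le_or_gt (r y) k with hy | hy
  · have hx : r x ≤ k := (hr.monotone hxy).trans hy
    rw [envelope_of_le hx, envelope_of_le hy]
    exact hψ.le_of_le hr hxy hy
  · rw [envelope_of_lt hy]
    rcases le_or_gt (r x) k with hx | hx
    · rw [envelope_of_le hx]
      exact hplus _ _ (mem_image_of_mem ψ hxy)
    · rw [envelope_of_lt hx]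
      exact hplus_mono _ _ (image_mono (Iic_subset_Iic.mpr hxy))

lemma exists_boxminus_eq_of_monotoneBelow {boxminus : L → L → L} {circ : L → L}
    (hA : AxiomSystemA boxplus boxminus circ) (hr : StrictMono r) (hψ : MonotoneBelow r k ψ) :
    ∃ φ ψ' : M → L, Monotone φ ∧ MonotoneBelow r (k + 1) ψ' ∧
      ∀ x, ψ x = boxminus (φ x) (ψ' x) := by
  let φ := envelope boxplus r k ψ
  have hφ : Monotone φ := monotone_envelope hA.le_boxplus hA.boxplus_mono hr hψ
  choose g hg_eq hg_ge using fun x =>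
    hA.exists_boxminus_eq (ψ x) (φ x) (le_envelope hA.le_boxplus x)
  let ψ' x := if r x ≤ k then circ (φ x) else g x
  have hcirc_le : ∀ x, circ (φ x) ≤ ψ' x := fun x => by
    by_cases hx : r x ≤ k
    · simp only [ψ', if_pos hx, le_rfl]
    · simpa only [ψ', if_neg hx] using hg_ge x
  refine ⟨φ, ψ', hφ, fun x y hxy hx => ?_, fun x => ?_⟩
  · have hx : r x ≤ k := Nat.le_of_lt_succ hx
    calc ψ' x = circ (φ x) := if_pos hx
      _ ≤ circ (φ y) := hA.circ_mono (hφ hxy)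
      _ ≤ ψ' y := hcirc_le y
  · by_cases hx : r x ≤ k
    · simp only [ψ', if_pos hx, hA.boxminus_circ, φ, envelope_of_le hx]
    · simp only [ψ', if_neg hx, hg_eq]

lemma exists_nestForm_of_monotoneBelow {boxminus : L → L → L} {circ : L → L}
    (hA : AxiomSystemA boxplus boxminus circ) (hr : StrictMono r) {D : ℕ} (hrD : ∀ x, r x ≤ D)
    (n : ℕ) (hψ : MonotoneBelow r k ψ) (hDk : D ≤ n + k) :
    ∃ φ : Fin (n + 1) → (M → L), (∀ i, Monotone (φ i)) ∧
      ∀ x, ψ x = nestForm boxminus n (fun i => φ i x) := by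
  induction n generalizing k ψ with
  | zero =>
    exact ⟨fun _ => ψ, fun _ => hψ.monotone hr hrD (by omega), fun _ => rfl⟩
  | succ n ih =>
    obtain ⟨φ₀, ψ', hφ₀, hψ', hψ_eq⟩ := exists_boxminus_eq_of_monotoneBelow hA hr hψ
    obtain ⟨φ, hφ, hψ'_eq⟩ := ih hψ' (by omega)
    refine ⟨Fin.cons φ₀ φ, Fin.cases hφ₀ hφ, fun x => ?_⟩
    rw [hψ_eq, hψ'_eq]
    rfl

theorem exists_nestForm_of_strictMono {boxminus : L → L → L} {circ : L → L}
    (hA : AxiomSystemA boxplus boxminus circ) (hr : StrictMono r) {D : ℕ} (hrD : ∀ x, r x ≤ D)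
    (ψ : M → L) :
    ∃ φ : Fin (D + 1) → (M → L), (∀ i, Monotone (φ i)) ∧
      ∀ x, ψ x = nestForm boxminus D (fun i => φ i x) :=
  exists_nestForm_of_monotoneBelow hA hr hrD D monotoneBelow_zero le_rfl

end Rank

section Height

variable {α : Type*} [Preorder α] {D : ℕ}

lemma height_le_of_forall_strictMono
    (hChain : ∀ (k : ℕ) (c : Fin (k + 1) → α), StrictMono c → k ≤ D) (x : α) : height x ≤ D :=
  height_le fun p _ => by exact_mod_cast hChain p.length p p.strictMono

lemma strictMono_toNat_height (hD : ∀ x : α, height x ≤ D) :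
    StrictMono fun x : α => (height x).toNat := by
  intro x y hxy
  have hx : height x ≠ ⊤ := ((hD x).trans_lt (ENat.natCast_lt_top D)).ne
  have hy : height y ≠ ⊤ := ((hD y).trans_lt (ENat.natCast_lt_top D)).ne
  have hlt := height_strictMono hxy (lt_top_iff_ne_top.mpr hx)
  rw [← ENat.natCast_toNat hx, ← ENat.natCast_toNat hy] at hlt
  exact_mod_cast hlt

lemma toNat_height_le (hD : ∀ x : α, height x ≤ D) (x : α) : (height x).toNat ≤ D :=
  ENat.toNat_le_of_le_natCast (hD x)

end Height

/-- Corollary 1: under axiom system 𝒜 and the bound `D` on lengths of strictly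
increasing chains in `M`, every `ψ : M → L` is given by the universal nested form
`⊟(φ₁, ⊟(φ₂, …, ⊟(φ_D, φ_{D+1})…))` with exactly `D + 1` monotone functions. -/
theorem universal_approximating_form_A
    {M L : Type*} [PartialOrder M] [PartialOrder L]
    (D : ℕ)
    (hChain : ∀ (k : ℕ) (c : Fin (k + 1) → M), StrictMono c → k ≤ D)
    (boxplus : Set L → L) (boxminus : L → L → L) (circ : L → L)
    (hA2a : ∀ (S : Set L), ∀ x ∈ S, x ≤ boxplus S)
    (hA2b : ∀ S T : Set L, S ⊆ T → boxplus S ≤ boxplus T)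
    (hA3a : ∀ l : L, boxminus l (circ l) = l)
    (hA3b : Monotone circ)
    (hA4 : ∀ l l' : L, l ≤ l' → ∃ l'' : L, boxminus l' l'' = l ∧ circ l' ≤ l'')
    (ψ : M → L) :
    ∃ φ : Fin (D + 1) → (M → L),
      (∀ i, Monotone (φ i)) ∧
        ∀ x : M, ψ x = nestForm boxminus D (fun i => φ i x) := by
  have hA : AxiomSystemA boxplus boxminus circ := ⟨hA2a, hA2b, hA3a, hA3b, hA4⟩
  have hD := height_le_of_forall_strictMono hChain
  exact exists_nestForm_of_strictMono hA (strictMono_toNat_height hD) (toNat_height_le hD) ψ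
end

section
/- Let (M,≤_M) and (L,≤_L) be partially ordered sets such that every strictly increasing chain m_0 <_M … <_M m_k in M has k ≤ D, and such that L has a greatest element γ. Let ⊟: L × L → L and o ∈ L satisfy: ⊟(l, o) = l for all l ∈ L, and for all l ≤_L l' there exists l'' ∈ L with ⊟(l', l'') = l and o ≤_L l''. Then for every function ψ: M → L there exist θ-functions θ_1, …, θ_{D+1}: M → L with θ_i of rank i for each i, such that for all x ∈ M, ψ(x) = ⊟(θ_1(x), ⊟(θ_2(x), …, ⊟(θ_D(x), θ_{D+1}(x))…)). -/
/-- The stratification of a poset: `stratum 0 = M₁` is the set of minimal elements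
of `M`, and `stratum n = M_{n+1}` is the set of minimal elements of
`M ∖ (M₁ ∪ … ∪ M_n)`.  An element of `stratum n` has rank `n + 1`. -/
def stratum {M : Type*} [PartialOrder M] : ℕ → Set M
  | n => {x | (∀ i, i < n → x ∉ stratum i) ∧
      ∀ y : M, (∀ i, i < n → y ∉ stratum i) → ¬y < x}

/-!
The rank of `x` is `Order.height x + 1`. At an element of height `j`, the nested form of
θ-functions `θ_i` of ranks `i + 1` reads `⊟(γ, …, ⊟(γ, ⊟(θ_j x, ⊟(o, …, o)))…)` with `j` copies
of `γ`, which collapses to `(⊟ γ)^[j] (θ_j x)` since `⊟(l, o) = l`. As every `l` lies below `γ`,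
the second axiom peels off one `γ` at a time: each `l` equals `(⊟ γ)^[n] v` for some `v`, with
`o ≤ v` when `n > 0`. Choosing `θ_j x` to be such a `v` for `l = ψ x` gives the representation,
and `θ_j` is monotone because height is strictly monotone where finite and `o ≤ v ≤ γ`.
-/

theorem mem_stratum_iff {M : Type*} [PartialOrder M] {n : ℕ} {x : M} :
    x ∈ stratum n ↔ Order.height x = n := by
  induction n using Nat.strong_induction_on generalizing x with
  | _ n ih =>
    have not_mem_lower_strata :
        ∀ z : M, (∀ i, i < n → z ∉ stratum i) ↔ (n : ℕ∞) ≤ Order.height z := by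
      refine fun z => ⟨fun h => ?_, fun h i hi hz => ?_⟩
      · by_contra! hlt
        lift Order.height z to ℕ using (hlt.trans (WithTop.coe_lt_top n)).ne with m hm
        exact h m (by exact_mod_cast hlt) (ih m (by exact_mod_cast hlt) |>.mpr hm.symm)
      · rw [(ih i hi).mp hz] at h
        exact absurd (by exact_mod_cast h : n ≤ i) (by omega)
    rw [stratum, Set.mem_ofPred_eq, Order.height_eq_coe_iff_minimal_le_height,
      minimal_iff_forall_lt]
    simp only [not_mem_lower_strata]
    exact and_congr_right fun _ => ⟨fun h y hyx hy => h y hy hyx, fun h y hy hyx => h hyx hy⟩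

section NestForm

variable {L : Type*} (sub : L → L → L) {o : L} (hsub : ∀ l, sub l o = l)
include hsub

theorem nestForm_const (k : ℕ) : nestForm sub k (fun _ => o) = o := by
  induction k with
  | zero => rfl
  | succ k ih => exact (congrArg (sub o) ih).trans (hsub o)

theorem nestForm_eq_iterate (γ : L) {k j : ℕ} (hj : j ≤ k) (φ : Fin (k + 1) → L)
    (h_lt : ∀ i : Fin (k + 1), (i : ℕ) < j → φ i = γ)
    (h_gt : ∀ i : Fin (k + 1), j < (i : ℕ) → φ i = o) :
    nestForm sub k φ = (sub γ)^[j] (φ ⟨j, by omega⟩) := by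
  induction k generalizing j with
  | zero =>
    obtain rfl : j = 0 := by omega
    rfl
  | succ k ih =>
    cases j with
    | zero =>
      have htail : (fun i : Fin (k + 1) => φ i.succ) = fun _ => o :=
        funext fun i => h_gt i.succ i.succ_pos
      exact (congrArg (sub (φ 0)) (htail ▸ nestForm_const sub hsub k)).trans (hsub _)
    | succ j =>
      rw [Function.iterate_succ_apply']
      have htail := ih (j := j) (by omega) (fun i => φ i.succ)
        (fun i hi => h_lt i.succ (by simpa using hi)) (fun i hi => h_gt i.succ (by simpa using hi))
      exact (congrArg (sub · _) (h_lt 0 j.succ_pos)).trans (congrArg (sub γ) htail)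

end NestForm

theorem Order.height_le_of_forall_strictMono_fin {M : Type*} [Preorder M] {D : ℕ}
    (hChain : ∀ (k : ℕ) (c : Fin (k + 1) → M), StrictMono c → k ≤ D) (x : M) :
    Order.height x ≤ D :=
  Order.height_le fun p _ => by exact_mod_cast hChain p.length p.toFun p.strictMono

theorem exists_iterate_eq_and_le {L : Type*} [LE L] {sub : L → L → L} {γ o : L}
    (h : ∀ l, ∃ l', sub γ l' = l ∧ o ≤ l') (n : ℕ) (l : L) :
    ∃ l', (sub γ)^[n] l' = l ∧ (0 < n → o ≤ l') := by
  induction n with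
  | zero => exact ⟨l, rfl, by omega⟩
  | succ n ih =>
    obtain ⟨l', hl', -⟩ := ih
    obtain ⟨l'', hl'', ho⟩ := h l'
    exact ⟨l'', by rw [Function.iterate_succ_apply, hl'', hl'], fun _ => ho⟩

section RankTheta

variable {M L : Type*} {o γ : L} {i : ℕ} {v : M → L} {x : M}

-- The θ-function of rank `i + 1` that agrees with `v` on `stratum i`.
noncomputable def rankTheta [Preorder M] (o γ : L) (i : ℕ) (v : M → L) (x : M) : L :=
  if Order.height x < i then o else if (i : ℕ∞) < Order.height x then γ else v x

theorem rankTheta_of_height_lt [Preorder M] (h : Order.height x < i) :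
    rankTheta o γ i v x = o :=
  if_pos h

theorem rankTheta_of_lt_height [Preorder M] (h : (i : ℕ∞) < Order.height x) :
    rankTheta o γ i v x = γ :=
  (if_neg h.le.not_gt).trans (if_pos h)

theorem rankTheta_of_height_eq [Preorder M] (h : Order.height x = i) :
    rankTheta o γ i v x = v x :=
  (if_neg h.not_lt).trans (if_neg h.not_gt)

theorem rankTheta_monotone [PartialOrder M] [Preorder L] (hγ : ∀ l, l ≤ γ)
    (hv : 0 < i → ∀ x, o ≤ v x) :
    Monotone (rankTheta o γ i v) := by
  intro x y hxy
  rcases hxy.eq_or_lt with rfl | hlt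
  · exact le_rfl
  rcases lt_trichotomy (Order.height x) i with hx | hx | hx
  · rw [rankTheta_of_height_lt hx]
    rcases lt_trichotomy (Order.height y) i with hy | hy | hy
    · rw [rankTheta_of_height_lt hy]
    · rw [rankTheta_of_height_eq hy]
      exact hv (Nat.cast_pos.mp (zero_le.trans_lt hx)) y
    · rw [rankTheta_of_lt_height hy]
      exact hγ o
  · have hy : (i : ℕ∞) < Order.height y :=
      hx ▸ Order.height_strictMono hlt (hx ▸ WithTop.coe_lt_top i)
    rw [rankTheta_of_lt_height hy]
    exact hγ _
  · rw [rankTheta_of_lt_height hx, rankTheta_of_lt_height (hx.trans_le (Order.height_mono hxy))]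

end RankTheta

/-- Theorem 2: if strictly increasing chains in `M` have length at most `D`, `L` has
a greatest element `γ`, and `⊟`, `o` satisfy the relevant parts of axiom system 𝒜,
then every `ψ : M → L` is represented by a nested form of θ-functions
`θ₁, …, θ_{D+1}` where `θ_i` has rank `i` (here `θ i`, `i : Fin (D+1)`, has rank
`i + 1`: it takes the value `o` on elements of rank `< i + 1` and the value `γ` on
elements of rank `> i + 1`). -/
theorem theta_approximating_form
    {M L : Type*} [PartialOrder M] [PartialOrder L]
    (D : ℕ)
    (hChain : ∀ (k : ℕ) (c : Fin (k + 1) → M), StrictMono c → k ≤ D)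
    (γ : L) (hγ : ∀ l : L, l ≤ γ)
    (boxminus : L → L → L) (o : L)
    (h3 : ∀ l : L, boxminus l o = l)
    (h4 : ∀ l l' : L, l ≤ l' → ∃ l'' : L, boxminus l' l'' = l ∧ o ≤ l'')
    (ψ : M → L) :
    ∃ θ : Fin (D + 1) → (M → L),
      (∀ i, Monotone (θ i)) ∧
      (∀ (i : Fin (D + 1)) (x : M) (j : ℕ), j < (i : ℕ) → x ∈ stratum j → θ i x = o) ∧
      (∀ (i : Fin (D + 1)) (x : M) (j : ℕ), (i : ℕ) < j → x ∈ stratum j → θ i x = γ) ∧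
      ∀ x : M, ψ x = nestForm boxminus D (fun i => θ i x) := by
  choose peel hpeel_iter hpeel_le using exists_iterate_eq_and_le (fun l => h4 l γ (hγ l))
  refine ⟨fun i => rankTheta o γ i (peel i ∘ ψ),
    fun i => rankTheta_monotone hγ fun hi x => hpeel_le i (ψ x) hi,
    fun i x j hj hx => rankTheta_of_height_lt (mem_stratum_iff.mp hx ▸ by exact_mod_cast hj),
    fun i x j hj hx => rankTheta_of_lt_height (mem_stratum_iff.mp hx ▸ by exact_mod_cast hj),
    fun x => ?_⟩
  have hxD := Order.height_le_of_forall_strictMono_fin hChain x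
  lift Order.height x to ℕ using ne_top_of_le_ne_top WithTop.coe_ne_top hxD with j hj
  rw [nestForm_eq_iterate boxminus h3 γ (by exact_mod_cast hxD) _
      (fun i hi => rankTheta_of_lt_height (hj ▸ by exact_mod_cast hi))
      (fun i hi => rankTheta_of_height_lt (hj ▸ by exact_mod_cast hi)),
    rankTheta_of_height_eq hj.symm]
  exact (hpeel_iter j (ψ x)).symm
end

section
/- Let (M,≤_M) and (L,≤_L) be partially ordered sets, let D be a natural number such that every strictly decreasing chain m_0 >_M m_1 >_M … >_M m_k in M has k ≤ D, and let ⊞*: Set L → L, ⊟*: L × L → L, ⊚*: L → L satisfy the dual axiom system 𝒜*. Then for every function ψ: M → L there exist a natural number k ≤ D and monotone functions φ_1, …, φ_{k+1}: M → L such that for all x ∈ M, ψ(x) = ⊟*(φ_1(x), ⊟*(φ_2(x), …, ⊟*(φ_k(x), φ_{k+1}(x))…)); in particular the number of occurrences of ⊟* is at most D. -/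
open Set Order

theorem exists_strictAnti_nat_le_of_chain_le {M : Type*} [PartialOrder M] {D : ℕ}
    (hChain : ∀ (k : ℕ) (c : Fin (k + 1) → M), StrictAnti c → k ≤ D) :
    ∃ r : M → ℕ, StrictAnti r ∧ ∀ x, r x ≤ D := by
  have hle : ∀ x : M, coheight x ≤ D := fun x =>
    coheight_le fun p _ => by
      exact_mod_cast hChain p.length (p ∘ Fin.rev)
        (p.strictMono.comp_strictAnti Fin.rev_strictAnti)
  have hfin : ∀ x : M, coheight x ≠ ⊤ := fun x => ((hle x).trans_lt (ENat.natCast_lt_top D)).ne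
  refine ⟨fun x => (coheight x).toNat, fun x y hxy => ?_,
    fun x => ENat.toNat_le_of_le_natCast (hle x)⟩
  have h := coheight_strictAnti hxy (lt_top_iff_ne_top.2 (hfin y))
  rwa [← ENat.natCast_toNat (hfin x), ← ENat.natCast_toNat (hfin y), Nat.cast_lt] at h

theorem monotoneOn_Ici_of_le_of_eq_of_lt {α β : Type*} [PartialOrder α] [Preorder β]
    {f g : α → β} (hg : Monotone g) (hfg : ∀ y, f y ≤ g y) {x : α}
    (hx : ∀ y, x < y → f y = g y) : MonotoneOn f (Ici x) := by
  intro u hu v _ huv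
  rcases huv.eq_or_lt with rfl | huv
  · rfl
  calc f u ≤ g u := hfg u
    _ ≤ g v := hg huv.le
    _ = f v := (hx v (lt_of_le_of_lt hu huv)).symm

section

variable {M L : Type*} [PartialOrder M] [PartialOrder L]

open Classical in
noncomputable def lowerApprox (boxplusS : Set L → L) (ψ : M → L) (x : M) : L :=
  if MonotoneOn ψ (Ici x) then ψ x else boxplusS (ψ '' Ici x)

theorem lowerApprox_of_monotoneOn {boxplusS : Set L → L} {ψ : M → L} {x : M}
    (h : MonotoneOn ψ (Ici x)) : lowerApprox boxplusS ψ x = ψ x := by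
  simp [lowerApprox, h]

theorem lowerApprox_le {boxplusS : Set L → L} (hA2a : ∀ (S : Set L), ∀ x ∈ S, boxplusS S ≤ x)
    (ψ : M → L) (x : M) : lowerApprox boxplusS ψ x ≤ ψ x := by
  unfold lowerApprox
  split_ifs
  · rfl
  · exact hA2a _ _ (mem_image_of_mem ψ self_mem_Ici)

theorem monotone_lowerApprox {boxplusS : Set L → L}
    (hA2a : ∀ (S : Set L), ∀ x ∈ S, boxplusS S ≤ x)
    (hA2b : ∀ S T : Set L, S ⊆ T → boxplusS T ≤ boxplusS S) (ψ : M → L) :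
    Monotone (lowerApprox boxplusS ψ) := by
  intro x x' hxx'
  by_cases hx : MonotoneOn ψ (Ici x)
  · have hx' : MonotoneOn ψ (Ici x') := hx.mono (Ici_subset_Ici.2 hxx')
    rw [lowerApprox_of_monotoneOn hx, lowerApprox_of_monotoneOn hx']
    exact hx self_mem_Ici hxx' hxx'
  · rw [lowerApprox, if_neg hx, lowerApprox]
    split_ifs
    · exact hA2a _ _ (mem_image_of_mem ψ hxx')
    · exact hA2b _ _ (image_mono (Ici_subset_Ici.2 hxx'))

theorem exists_boxminus_eq_le_circ {boxminusS : L → L → L} {circS : L → L}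
    (hA3a : ∀ l : L, boxminusS l (circS l) = l)
    (hA4 : ∀ l' l : L, l' ≤ l → ∃ l'' : L, boxminusS l' l'' = l ∧ l'' ≤ circS l')
    {l' l : L} (h : l' ≤ l) :
    ∃ l'', boxminusS l' l'' = l ∧ l'' ≤ circS l' ∧ (l' = l → l'' = circS l') := by
  by_cases hl : l' = l
  · subst hl
    exact ⟨circS l', hA3a l', le_rfl, fun _ => rfl⟩
  · obtain ⟨l'', hsub, hle⟩ := hA4 l' l h
    exact ⟨l'', hsub, hle, fun h => absurd h hl⟩

theorem exists_monotone_boxminus_step {boxplusS : Set L → L} {boxminusS : L → L → L}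
    {circS : L → L} (hA2a : ∀ (S : Set L), ∀ x ∈ S, boxplusS S ≤ x)
    (hA2b : ∀ S T : Set L, S ⊆ T → boxplusS T ≤ boxplusS S)
    (hA3a : ∀ l : L, boxminusS l (circS l) = l) (hA3b : Monotone circS)
    (hA4 : ∀ l' l : L, l' ≤ l → ∃ l'' : L, boxminusS l' l'' = l ∧ l'' ≤ circS l')
    (ψ : M → L) :
    ∃ φ ψ' : M → L, Monotone φ ∧ (∀ x, boxminusS (φ x) (ψ' x) = ψ x) ∧
      ∀ x, (∀ y, x < y → MonotoneOn ψ (Ici y)) → MonotoneOn ψ' (Ici x) := by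
  have hφ := monotone_lowerApprox hA2a hA2b ψ
  choose ψ' hsub hle heq using fun x =>
    exists_boxminus_eq_le_circ hA3a hA4 (lowerApprox_le hA2a ψ x)
  exact ⟨_, ψ', hφ, hsub, fun x hx => monotoneOn_Ici_of_le_of_eq_of_lt (hA3b.comp hφ) hle
    fun y hy => heq y (lowerApprox_of_monotoneOn (hx y hy))⟩

theorem exists_nestForm_of_strictAnti_rank {boxplusS : Set L → L} {boxminusS : L → L → L}
    {circS : L → L} (hA2a : ∀ (S : Set L), ∀ x ∈ S, boxplusS S ≤ x)
    (hA2b : ∀ S T : Set L, S ⊆ T → boxplusS T ≤ boxplusS S)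
    (hA3a : ∀ l : L, boxminusS l (circS l) = l) (hA3b : Monotone circS)
    (hA4 : ∀ l' l : L, l' ≤ l → ∃ l'' : L, boxminusS l' l'' = l ∧ l'' ≤ circS l')
    {D : ℕ} {r : M → ℕ} (hr : StrictAnti r) (hrD : ∀ x, r x ≤ D) (n : ℕ) (ψ : M → L)
    (hψ : ∀ x, r x + n ≤ D → MonotoneOn ψ (Ici x)) :
    ∃ φ : Fin (n + 1) → M → L, (∀ i, Monotone (φ i)) ∧
      ∀ x, ψ x = nestForm boxminusS n fun i => φ i x := by
  induction n generalizing ψ with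
  | zero =>
    refine ⟨fun _ => ψ, fun _ a b hab => ?_, fun _ => rfl⟩
    exact hψ a (hrD a) self_mem_Ici hab hab
  | succ n ih =>
    obtain ⟨φ₀, ψ', hφ₀, hsub, hψ'⟩ :=
      exists_monotone_boxminus_step hA2a hA2b hA3a hA3b hA4 ψ
    obtain ⟨φ, hφ, hrep⟩ := ih ψ' fun x hx =>
      hψ' x fun y hxy => hψ y (by have := hr hxy; omega)
    refine ⟨Fin.cons φ₀ φ, Fin.cases hφ₀ hφ, fun x => ?_⟩
    rw [← hsub x, hrep x]
    rfl

end

/-- Theorem 1*: under the dual axiom system 𝒜* and the bound `D` on lengths of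
strictly decreasing chains in `M`, every `ψ : M → L` has a representation
`ψ = ⊟*(φ₁, ⊟*(φ₂, …, ⊟*(φ_k, φ_{k+1})…))` with all `φᵢ` monotone and `k ≤ D`. -/
theorem successive_approximation_A_dual
    {M L : Type*} [PartialOrder M] [PartialOrder L]
    (D : ℕ)
    (hChain : ∀ (k : ℕ) (c : Fin (k + 1) → M), StrictAnti c → k ≤ D)
    (boxplusS : Set L → L) (boxminusS : L → L → L) (circS : L → L)
    (hA2a : ∀ (S : Set L), ∀ x ∈ S, boxplusS S ≤ x)
    (hA2b : ∀ S T : Set L, S ⊆ T → boxplusS T ≤ boxplusS S)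
    (hA3a : ∀ l : L, boxminusS l (circS l) = l)
    (hA3b : Monotone circS)
    (hA4 : ∀ l' l : L, l' ≤ l → ∃ l'' : L, boxminusS l' l'' = l ∧ l'' ≤ circS l')
    (ψ : M → L) :
    ∃ k ≤ D, ∃ φ : Fin (k + 1) → (M → L),
      (∀ i, Monotone (φ i)) ∧
        ∀ x : M, ψ x = nestForm boxminusS k (fun i => φ i x) := by
  obtain ⟨r, hr, hrD⟩ := exists_strictAnti_nat_le_of_chain_le hChain
  have hmax : ∀ x, r x + D ≤ D → MonotoneOn ψ (Ici x) := fun x hx => by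
    have hx : IsMax x := fun y hxy =>
      hxy.eq_or_lt.elim (fun h => h.ge) fun hlt => absurd (hr hlt) (by omega)
    rw [hx.Ici_eq]
    exact monotoneOn_singleton ψ
  obtain ⟨φ, hφ, hrep⟩ :=
    exists_nestForm_of_strictAnti_rank hA2a hA2b hA3a hA3b hA4 hr hrD D ψ hmax
  exact ⟨D, le_rfl, φ, hφ, hrep⟩
end

section
/- Let (M,≤_M) and (L,≤_L) be partially ordered sets, let D be a natural number such that every strictly decreasing chain m_0 >_M m_1 >_M … >_M m_k in M has k ≤ D, assume every strictly decreasing chain in L is finite, and let ⊎*: L × L → L, ⊟*: L × L → L, ⊚*: L → L satisfy the dual axiom system ℬ*. Then for every function ψ: M → L there exist a natural number k ≤ D and monotone functions φ_1, …, φ_{k+1}: M → L such that for all x ∈ M, ψ(x) = ⊟*(φ_1(x), ⊟*(φ_2(x), …, ⊟*(φ_k(x), φ_{k+1}(x))…)); in particular the number of occurrences of ⊟* is at most D. -/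
open Order

theorem wellFoundedLT_of_forall_not_strictAnti {L : Type*} [Preorder L]
    (h : ∀ f : ℕ → L, ¬StrictAnti f) : WellFoundedLT L :=
  ⟨wellFounded_iff_isEmpty_descending_chain.mpr
    ⟨fun ⟨f, hf⟩ => h f (strictAnti_nat_of_succ_lt hf)⟩⟩

theorem exists_isBot_of_wellFoundedLT {L : Type*} [Preorder L] [WellFoundedLT L]
    [IsCodirectedOrder L] [Nonempty L] : ∃ b : L, IsBot b := by
  obtain ⟨b, hb⟩ := WellFoundedLT.exists_minimal (α := L) inferInstance Set.univ Set.univ_nonempty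
  exact ⟨b, (minimal_true.mp hb).isBot⟩

theorem exists_strictAnti_nat_le_of_forall_strictAnti_fin_le {M : Type*} [Preorder M] {D : ℕ}
    (hChain : ∀ (k : ℕ) (c : Fin (k + 1) → M), StrictAnti c → k ≤ D) :
    ∃ u : M → ℕ, StrictAnti u ∧ ∀ x, u x ≤ D := by
  have hle (x : M) : coheight x ≤ D := coheight_le fun p _ => by
    exact_mod_cast hChain p.length (p ∘ Fin.rev) (p.strictMono.comp_strictAnti Fin.rev_strictAnti)
  have hcoe (x : M) : ((coheight x).toNat : ℕ∞) = coheight x :=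
    ENat.natCast_toNat ((hle x).trans_lt (ENat.natCast_lt_top D)).ne
  refine ⟨fun x => (coheight x).toNat, fun a b hab => ?_, fun x => ?_⟩
  · have := coheight_strictAnti hab ((hle b).trans_lt (ENat.natCast_lt_top D))
    rw [← hcoe a, ← hcoe b] at this
    exact_mod_cast this
  · have := hle x
    rw [← hcoe x] at this
    exact_mod_cast this

section Approximation

variable {M L : Type*} [PartialOrder M] [Preorder L]

def MonotoneUpToRank (u : M → ℕ) (j : ℕ) (g : M → L) : Prop :=
  ∀ ⦃a b⦄, a < b → u a ≤ j → g a ≤ g b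

namespace MonotoneUpToRank

variable {u : M → ℕ} {j : ℕ} {g : M → L}

theorem zero (hu : StrictAnti u) (g : M → L) : MonotoneUpToRank u 0 g :=
  fun _ _ hab ha => absurd (hu hab) (by omega)

theorem monotone (hg : MonotoneUpToRank u j g) (hj : ∀ x, u x ≤ j) : Monotone g :=
  monotone_iff_forall_lt.mpr fun a _ hab => hg hab (hj a)

theorem monotone_piecewise_bot (hu : StrictAnti u) (hg : MonotoneUpToRank u j g)
    {b : L} (hb : IsBot b) [DecidablePred fun x => u x ≤ j] :
    Monotone fun x => if u x ≤ j then g x else b := by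
  refine monotone_iff_forall_lt.mpr fun x y hxy => ?_
  by_cases hx : u x ≤ j
  · have hy : u y ≤ j := (hu hxy).le.trans hx
    simpa only [if_pos hx, if_pos hy] using hg hxy hx
  · simpa only [if_neg hx] using hb _

end MonotoneUpToRank

variable {sub : L → L → L} {circ : L → L} {u : M → ℕ} {b : L}

theorem exists_sub_eq_monotoneUpToRank_succ (hu : StrictAnti u) (hb : IsBot b)
    (hsub_circ : ∀ l, sub l (circ l) = l) (hcirc : Monotone circ)
    (hsub : ∀ l' l, l' ≤ l → ∃ l'', sub l' l'' = l ∧ l'' ≤ circ l')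
    {j : ℕ} {g : M → L} (hg : MonotoneUpToRank u j g) :
    ∃ φ g' : M → L, Monotone φ ∧ MonotoneUpToRank u (j + 1) g' ∧
      ∀ x, g x = sub (φ x) (g' x) := by
  classical
  set φ : M → L := fun x => if u x ≤ j then g x else b
  have hrem (x : M) :
      ∃ l, sub (φ x) l = g x ∧ l ≤ circ (φ x) ∧ (u x ≤ j → l = circ (φ x)) := by
    by_cases hx : u x ≤ j
    · refine ⟨circ (φ x), ?_, le_rfl, fun _ => rfl⟩
      simp only [φ, if_pos hx, hsub_circ]
    · obtain ⟨l, hl, hle⟩ := hsub (φ x) (g x) (by simpa only [φ, if_neg hx] using hb (g x))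
      exact ⟨l, hl, hle, fun h => absurd h hx⟩
  choose g' hg'_sub hg'_le hg'_eq using hrem
  have hφ : Monotone φ := hg.monotone_piecewise_bot hu hb
  refine ⟨φ, g', hφ, fun x y hxy hx => ?_, fun x => (hg'_sub x).symm⟩
  have hy : u y ≤ j := by have := hu hxy; omega
  calc g' x ≤ circ (φ x) := hg'_le x
    _ ≤ circ (φ y) := hcirc (hφ hxy.le)
    _ = g' y := (hg'_eq y hy).symm

theorem exists_nestForm_of_monotoneUpToRank (hu : StrictAnti u) (hb : IsBot b)
    (hsub_circ : ∀ l, sub l (circ l) = l) (hcirc : Monotone circ)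
    (hsub : ∀ l' l, l' ≤ l → ∃ l'', sub l' l'' = l ∧ l'' ≤ circ l') :
    ∀ (n j : ℕ) (g : M → L), (∀ x, u x ≤ j + n) → MonotoneUpToRank u j g →
      ∃ φ : Fin (n + 1) → M → L, (∀ i, Monotone (φ i)) ∧ ∀ x, g x = nestForm sub n (φ · x)
  | 0, _, g, hu_le, hg => ⟨fun _ => g, fun _ => hg.monotone hu_le, fun _ => rfl⟩
  | n + 1, j, g, hu_le, hg => by
    obtain ⟨φ₀, g', hφ₀, hg', hg_eq⟩ :=
      exists_sub_eq_monotoneUpToRank_succ hu hb hsub_circ hcirc hsub hg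
    obtain ⟨φ, hφ, hg'_eq⟩ := exists_nestForm_of_monotoneUpToRank hu hb hsub_circ hcirc hsub
      n (j + 1) g' (fun x => by have := hu_le x; omega) hg'
    refine ⟨Fin.cons φ₀ φ, Fin.cases hφ₀ hφ, fun x => ?_⟩
    rw [hg_eq x, hg'_eq x]
    rfl

end Approximation

/-- Theorem 3*: under the dual axiom system ℬ*, the bound `D` on lengths of
strictly decreasing chains in `M`, and finiteness of all strictly decreasing chains
in `L`, every `ψ : M → L` has a representation
`ψ = ⊟*(φ₁, ⊟*(φ₂, …, ⊟*(φ_k, φ_{k+1})…))` with all `φᵢ` monotone and `k ≤ D`. -/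
theorem successive_approximation_B_dual
    {M L : Type*} [PartialOrder M] [PartialOrder L]
    (D : ℕ)
    (hChain : ∀ (k : ℕ) (c : Fin (k + 1) → M), StrictAnti c → k ≤ D)
    (hLChain : ∀ f : ℕ → L, ¬StrictAnti f)
    (joinS : L → L → L) (boxminusS : L → L → L) (circS : L → L)
    (hB2 : ∀ x y : L, joinS x y ≤ x ∧ joinS x y ≤ y)
    (hB3a : ∀ l : L, boxminusS l (circS l) = l)
    (hB3b : Monotone circS)
    (hB4 : ∀ l' l : L, l' ≤ l → ∃ l'' : L, boxminusS l' l'' = l ∧ l'' ≤ circS l')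
    (ψ : M → L) :
    ∃ k ≤ D, ∃ φ : Fin (k + 1) → (M → L),
      (∀ i, Monotone (φ i)) ∧
        ∀ x : M, ψ x = nestForm boxminusS k (fun i => φ i x) := by
  rcases isEmpty_or_nonempty M with hM | hM
  · exact ⟨0, D.zero_le, fun _ => ψ, fun _ => Subsingleton.monotone ψ, fun _ => rfl⟩
  have : Nonempty L := hM.map ψ
  have : WellFoundedLT L := wellFoundedLT_of_forall_not_strictAnti hLChain
  have : IsCodirectedOrder L := ⟨fun x y => ⟨joinS x y, hB2 x y⟩⟩
  obtain ⟨b, hb⟩ := exists_isBot_of_wellFoundedLT (L := L)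
  obtain ⟨u, hu, huD⟩ := exists_strictAnti_nat_le_of_forall_strictAnti_fin_le hChain
  obtain ⟨φ, hφ, hψ⟩ := exists_nestForm_of_monotoneUpToRank hu hb hB3a hB3b hB4 D 0 ψ
    (fun x => (huD x).trans_eq D.zero_add.symm) (.zero hu ψ)
  exact ⟨D, le_rfl, φ, hφ, hψ⟩
end

section
/- Every Boolean function f: Bool^n → Bool can be represented by a Boolean approximating form: there exist a natural number k ≤ n and monotone Boolean functions P_1, …, P_{k+1}: Bool^n → Bool such that for all x ∈ Bool^n, f(x) = P_1(x) ∧ ¬(P_2(x) ∧ ¬(P_3(x) ∧ … ∧ ¬(P_k(x) ∧ ¬P_{k+1}(x))…)). -/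
section PartialOrder

variable {α : Type*} [PartialOrder α]

theorem Bool.monotone_decide_mem_upperSet (s : UpperSet α) [DecidablePred (· ∈ s)] :
    Monotone fun x => decide (x ∈ s) := fun _ _ hxy =>
  Bool.le_iff_imp.mpr fun hx => decide_eq_true_iff.mpr (s.upper hxy (of_decide_eq_true hx))

theorem Bool.monotone_of_forall_isMax {f : α → Bool} (hf : ∀ x, f x = true → IsMax x) :
    Monotone f := fun x _ hxy =>
  Bool.le_iff_imp.mpr fun hx => (hf x hx).eq_of_le hxy ▸ hx

theorem exists_monotone_nestForm_of_rank (r : α → ℕ) (hr : StrictMono r) (N : ℕ)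
    (hN : ∀ x, r x ≤ N) (m : ℕ) (f : α → Bool) (hf : ∀ x, f x = true → N ≤ r x + m) :
    ∃ k ≤ m, ∃ P : Fin (k + 1) → α → Bool, (∀ i, Monotone (P i)) ∧
      ∀ x, f x = nestForm (fun a b => a && !b) k (fun i => P i x) := by
  induction m generalizing f with
  | zero =>
    refine ⟨0, le_rfl, fun _ => f, fun _ => Bool.monotone_of_forall_isMax ?_, fun _ => rfl⟩
    exact fun x hx => isMax_iff_forall_not_lt.mpr fun y hxy => by
      have := hr hxy; have := hf x hx; have := hN y; omega
  | succ m ih =>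
    classical
    set g : α → Bool := fun x => decide (x ∈ upperClosure {y | f y = true})
    have hfg : ∀ x, f x = true → g x = true := fun x hx =>
      decide_eq_true_iff.mpr (subset_upperClosure hx)
    obtain ⟨k, hk, Q, hQ, hgf⟩ := ih (fun x => g x && !f x) fun x hx => by
      simp only [g, Bool.and_eq_true, decide_eq_true_iff, mem_upperClosure, Bool.not_eq_true']
        at hx
      obtain ⟨⟨y, hy, hyx⟩, hx⟩ := hx
      have hlt : r y < r x := hr (hyx.lt_of_ne fun h => by simp_all)
      have := hf y hy
      omega
    refine ⟨k + 1, by omega, Fin.cons g Q, Fin.cases (Bool.monotone_decide_mem_upperSet _) hQ,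
      fun x => ?_⟩
    simp only [nestForm, Fin.cons_zero, Fin.cons_succ, ← hgf x]
    cases hx : f x
    · cases g x <;> rfl
    · simp [hfg x hx]

end PartialOrder

theorem Bool.strictMono_sum_toNat {ι : Type*} [Fintype ι] :
    StrictMono fun x : ι → Bool => ∑ i, (x i).toNat := fun x y hxy => by
  obtain ⟨hle, i, hi⟩ := Pi.lt_def.mp hxy
  have toNat_strictMono : StrictMono Bool.toNat := by decide
  exact Finset.sum_lt_sum (fun j _ => Bool.toNat_le_toNat (hle j))
    ⟨i, Finset.mem_univ i, toNat_strictMono hi⟩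

theorem Bool.sum_toNat_le_card {ι : Type*} [Fintype ι] (x : ι → Bool) :
    ∑ i, (x i).toNat ≤ Fintype.card ι := by
  simpa using Finset.sum_le_card_nsmul Finset.univ _ 1 fun i _ => Bool.toNat_le (x i)

/-- Corollary: every Boolean function `f : Bool^n → Bool` is representable by a
Boolean approximating form
`f = P₁ ∧ ¬(P₂ ∧ ¬(P₃ ∧ … ∧ ¬(P_k ∧ ¬P_{k+1})…))`
with `k ≤ n` and all `Pᵢ` monotone (w.r.t. the componentwise order on `Bool^n`). -/
theorem boolean_approximating_form
    (n : ℕ) (f : (Fin n → Bool) → Bool) :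
    ∃ k ≤ n, ∃ P : Fin (k + 1) → (Fin n → Bool) → Bool,
      (∀ i, Monotone (P i)) ∧
        ∀ x : Fin n → Bool, f x = nestForm (fun a b => a && !b) k (fun i => P i x) := by
  have hN (x : Fin n → Bool) : ∑ i, (x i).toNat ≤ n := by
    simpa using Bool.sum_toNat_le_card x
  exact exists_monotone_nestForm_of_rank _ Bool.strictMono_sum_toNat n hN n f
    fun x _ => Nat.le_add_left n _
end
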